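/- Fix integers n ≥ 3 and M ≥ 1 and 0 < δ < 1, let s = ⌈n/2⌉, and let q = (n − s + 1)/n and q' = (1 − δ) q + δ. Then the total variation distance between μ_M and ν_{M,δ} equals the total variation distance between the Binomial(M, q) and Binomial(M, q') distributions; equivalently, ‖μ_M − ν_{M,δ}‖_TV = ‖L(|{i : D[i] ≥ s}|) − L(|{i : E[i] ≥ s}|)‖_TV where E ∼ μ_M and D ∼ ν_{M,δ}. -/

import Mathlib

open MeasureTheory

/-- Total variation distance between two measures:
`‖μ − ν‖_TV = sup_{A measurable} |μ(A) − ν(A)|`. -/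
noncomputable def tvDist {Ω : Type*} [MeasurableSpace Ω] (μ ν : Measure Ω) : ℝ :=
  ⨆ A : {A : Set Ω // MeasurableSet A}, |(μ A.1).toReal - (ν A.1).toReal|

/-- The uniform probability measure on a finset of `Fin n`. -/
noncomputable def unifOn {n : ℕ} (t : Finset (Fin n)) : Measure (Fin n) :=
  (t.card : ENNReal)⁻¹ • ∑ i ∈ t, Measure.dirac i

/-- The uniform distribution on `{1,…,n}` (represented as `Fin n`). -/
noncomputable def muCoord (n : ℕ) : Measure (Fin n) := unifOn Finset.univ

/-- The indices `{s,…,n}` with `s = ⌈n/2⌉`, in the `Fin n` representation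
(where `i : Fin n` stands for the index `i+1 ∈ {1,…,n}`). -/
def topHalf (n : ℕ) : Finset (Fin n) :=
  Finset.univ.filter fun i => (n + 1) / 2 ≤ i.1 + 1

/-- The perturbed coordinate distribution: with probability `1 − δ` a uniform
draw from `{1,…,n}`, with probability `δ` a uniform draw from `{⌈n/2⌉,…,n}`. -/
noncomputable def nuCoord (n : ℕ) (δ : ℝ) : Measure (Fin n) :=
  ENNReal.ofReal (1 - δ) • muCoord n + ENNReal.ofReal δ • unifOn (topHalf n)

/-- `μ_M`: the law of a vector of `M` i.i.d. coordinates uniform on `{1,…,n}`. -/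
noncomputable def muVec (n M : ℕ) : Measure (Fin M → Fin n) :=
  Measure.pi fun _ => muCoord n

/-- `ν_{M,δ}`: the law of a vector of `M` i.i.d. coordinates, each distributed
according to the perturbed coordinate distribution `nuCoord n δ`. -/
noncomputable def nuVec (n M : ℕ) (δ : ℝ) : Measure (Fin M → Fin n) :=
  Measure.pi fun _ => nuCoord n δ

/-- The binomial distribution `Binomial(M, q)` as a measure on `ℕ`. -/
noncomputable def binomMeasure (M : ℕ) (q : ℝ) : Measure ℕ :=
  ∑ k ∈ Finset.range (M + 1),
    ENNReal.ofReal ((M.choose k : ℝ) * q ^ k * (1 - q) ^ (M - k)) • Measure.dirac k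

/-- The number of coordinates of `v` landing in `{s,…,n}`, `s = ⌈n/2⌉`. -/
def countTop (n M : ℕ) (v : Fin M → Fin n) : ℕ :=
  (Finset.univ.filter fun j => (n + 1) / 2 ≤ (v j).1 + 1).card

/-! ### Auxiliary lemmas -/

lemma unifOn_apply {n : ℕ} (t : Finset (Fin n)) (s : Set (Fin n)) :
    unifOn t s = (t.card : ENNReal)⁻¹ * ∑ i ∈ t, s.indicator 1 i := by
  classical
  simp [unifOn, Measure.finset_sum_apply, Measure.dirac_apply, Set.indicator_apply]

lemma unifOn_singleton {n : ℕ} (t : Finset (Fin n)) (x : Fin n) :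
    unifOn t {x} = (t.card : ENNReal)⁻¹ * (if x ∈ t then 1 else 0) := by
  classical
  rw [unifOn_apply]
  congr 1
  simp [Set.indicator_apply, Finset.sum_ite_eq]

lemma unifOn_univ_le_one {n : ℕ} (t : Finset (Fin n)) : unifOn t Set.univ ≤ 1 := by
  classical
  rw [unifOn_apply]
  simp only [Set.indicator_univ, Pi.one_apply, Finset.sum_const, nsmul_eq_mul, mul_one]
  rcases eq_or_ne (t.card : ENNReal) 0 with h | h
  · simp [h]
  · rw [ENNReal.inv_mul_cancel h (by simp)]

instance unifOn_fin {n : ℕ} (t : Finset (Fin n)) : IsFiniteMeasure (unifOn t) :=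
  ⟨lt_of_le_of_lt (unifOn_univ_le_one t) (by norm_num)⟩

instance muCoord_fin (n : ℕ) : IsFiniteMeasure (muCoord n) := unifOn_fin _

instance nuCoord_fin (n : ℕ) (δ : ℝ) : IsFiniteMeasure (nuCoord n δ) := by
  constructor
  rw [nuCoord]
  simp only [Measure.add_apply, Measure.smul_apply, smul_eq_mul]
  exact ENNReal.add_lt_top.mpr ⟨ENNReal.mul_lt_top ENNReal.ofReal_lt_top (measure_lt_top _ _),
    ENNReal.mul_lt_top ENNReal.ofReal_lt_top (measure_lt_top _ _)⟩

lemma muCoord_singleton (n : ℕ) (x : Fin n) : muCoord n {x} = (n : ENNReal)⁻¹ := by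
  simp [muCoord, unifOn_singleton]

lemma nuCoord_singleton (n : ℕ) (δ : ℝ) (x : Fin n) :
    nuCoord n δ {x} = if x ∈ topHalf n
      then ENNReal.ofReal (1-δ) * (n : ENNReal)⁻¹ + ENNReal.ofReal δ * ((topHalf n).card : ENNReal)⁻¹
      else ENNReal.ofReal (1-δ) * (n : ENNReal)⁻¹ := by
  simp only [nuCoord, Measure.add_apply, Measure.smul_apply, smul_eq_mul,
    muCoord_singleton, unifOn_singleton]
  split <;> simp

lemma countTop_eq (n M : ℕ) (v : Fin M → Fin n) :
    countTop n M v = (Finset.univ.filter fun j => v j ∈ topHalf n).card := by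
  classical
  apply congrArg Finset.card
  ext j
  simp [topHalf, countTop]

lemma countTop_le (n M : ℕ) (v : Fin M → Fin n) : countTop n M v ≤ M := by
  classical
  simpa [countTop] using (Finset.card_filter_le Finset.univ fun j => (n + 1) / 2 ≤ (v j).1 + 1)

lemma muVec_singleton (n M : ℕ) (v : Fin M → Fin n) :
    muVec n M {v} = ((n : ENNReal)⁻¹) ^ M := by
  rw [muVec, ← Set.univ_pi_singleton v, Measure.pi_pi]
  simp [muCoord_singleton]

lemma nuVec_singleton (n M : ℕ) (δ : ℝ) (v : Fin M → Fin n) :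
    nuVec n M δ {v}
      = (ENNReal.ofReal (1-δ) * (n : ENNReal)⁻¹
          + ENNReal.ofReal δ * ((topHalf n).card : ENNReal)⁻¹) ^ (countTop n M v)
        * (ENNReal.ofReal (1-δ) * (n : ENNReal)⁻¹) ^ (M - countTop n M v) := by
  classical
  rw [nuVec, ← Set.univ_pi_singleton v, Measure.pi_pi]
  simp only [nuCoord_singleton]
  rw [Finset.prod_ite, Finset.prod_const, Finset.prod_const, countTop_eq]
  congr 2
  rw [Finset.filter_not, Finset.card_sdiff_of_subset (Finset.filter_subset _ _)]
  simp

lemma counting (n M : ℕ) (t : Finset (Fin n)) (k : ℕ) :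
    (Finset.univ.filter fun v : Fin M → Fin n =>
        (Finset.univ.filter fun j => v j ∈ t).card = k).card
      = M.choose k * t.card ^ k * (n - t.card) ^ (M - k) := by
  classical
  have hset : (Finset.univ.filter fun v : Fin M → Fin n =>
        (Finset.univ.filter fun j => v j ∈ t).card = k)
      = (Finset.univ.powersetCard k).biUnion
          (fun J => Fintype.piFinset fun j => if j ∈ J then t else tᶜ) := by
    ext v
    simp only [Finset.mem_filter, Finset.mem_univ, true_and, Finset.mem_biUnion,
      Finset.mem_powersetCard, Fintype.mem_piFinset]
    constructor
    · rintro rfl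
      refine ⟨Finset.univ.filter fun j => v j ∈ t, ⟨Finset.subset_univ _, rfl⟩, fun j => ?_⟩
      by_cases h : v j ∈ t <;> simp [h]
    · rintro ⟨J, ⟨-, rfl⟩, hJ⟩
      apply congrArg Finset.card
      ext j
      have := hJ j
      by_cases h : j ∈ J <;> simp_all
  rw [hset, Finset.card_biUnion]
  · have hcard : ∀ J ∈ Finset.univ.powersetCard k,
        (Fintype.piFinset fun j : Fin M => if j ∈ J then t else tᶜ).card
          = t.card ^ k * (n - t.card) ^ (M - k) := by
      intro J hJ
      rw [Finset.mem_powersetCard] at hJ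
      rw [Fintype.card_piFinset]
      have : ∀ j : Fin M, (if j ∈ J then t else tᶜ).card
          = if j ∈ J then t.card else n - t.card := by
        intro j; split <;> simp [Finset.card_compl]
      rw [Finset.prod_congr rfl fun j _ => this j, Finset.prod_ite, Finset.prod_const,
        Finset.prod_const, Finset.filter_univ_mem, hJ.2]
      congr 2
      rw [Finset.filter_not, Finset.card_sdiff_of_subset (Finset.filter_subset _ _),
        Finset.filter_univ_mem, hJ.2]
      simp
    rw [Finset.sum_congr rfl hcard, Finset.sum_const, Finset.card_powersetCard,
      Finset.card_univ, Fintype.card_fin, smul_eq_mul, mul_assoc]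
  · intro J hJ J' hJ' hne
    simp only [Finset.disjoint_left, Fintype.mem_piFinset]
    intro v hv hv'
    apply hne
    ext j
    have h1 := hv j
    have h2 := hv' j
    by_cases h : j ∈ J <;> by_cases h' : j ∈ J' <;> simp_all

lemma measure_eq_sum {Ω : Type*} [Fintype Ω] [MeasurableSpace Ω] [MeasurableSingletonClass Ω]
    (μ : Measure Ω) (A : Set Ω) [DecidablePred (· ∈ A)] :
    μ A = ∑ x ∈ Finset.univ.filter (· ∈ A), μ {x} := by
  have hA : A = ⋃ x ∈ Finset.univ.filter (· ∈ A), {x} := by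
    ext y; simp
  conv_lhs => rw [hA]
  rw [measure_biUnion_finset]
  · intro x hx y hy hxy
    simp [Function.onFun, Set.disjoint_singleton, hxy]
  · exact fun x _ => measurableSet_singleton x

lemma measurable_of_finite' {Ω β : Type*} [Finite Ω] [MeasurableSpace Ω]
    [MeasurableSingletonClass Ω] [MeasurableSpace β] (f : Ω → β) : Measurable f :=
  fun _ _ => (Set.toFinite _).measurableSet

lemma measure_toReal_eq_sum {Ω : Type*} [Fintype Ω] [MeasurableSpace Ω]
    [MeasurableSingletonClass Ω] (μ : Measure Ω) [IsFiniteMeasure μ] (A : Set Ω)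
    [DecidablePred (· ∈ A)] :
    (μ A).toReal = ∑ x ∈ Finset.univ.filter (· ∈ A), (μ {x}).toReal := by
  rw [measure_eq_sum μ A, ENNReal.toReal_sum (fun x _ => measure_ne_top μ _)]

lemma map_eq_weighted (n M : ℕ) (μ : Measure (Fin M → Fin n)) (c : ℕ → ENNReal)
    (hμ : ∀ v, μ {v} = c (countTop n M v)) (w : ℕ → ℝ)
    (hw : ∀ k ≤ M,
      (((Finset.univ.filter fun v : Fin M → Fin n => countTop n M v = k).card : ENNReal)) * c k
        = ENNReal.ofReal (w k)) :
    Measure.map (countTop n M) μ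
      = ∑ k ∈ Finset.range (M+1), ENNReal.ofReal (w k) • Measure.dirac k := by
  classical
  apply Measure.ext_of_singleton
  intro k
  rw [Measure.map_apply (measurable_of_finite' _) (measurableSet_singleton k),
    measure_eq_sum]
  have hfilter : (Finset.univ.filter (· ∈ countTop n M ⁻¹' {k}))
      = Finset.univ.filter fun v : Fin M → Fin n => countTop n M v = k := by
    apply Finset.filter_congr; intro v _; simp
  have hRHS : (∑ j ∈ Finset.range (M+1), ENNReal.ofReal (w j) • Measure.dirac j) {k}
      = if k ∈ Finset.range (M+1) then ENNReal.ofReal (w k) else 0 := by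
    simp only [Measure.finset_sum_apply, Measure.smul_apply, smul_eq_mul,
      Measure.dirac_apply, Set.indicator_apply, Set.mem_singleton_iff, Pi.one_apply]
    rw [Finset.sum_congr rfl (fun j _ => by
      rw [mul_ite, mul_one, mul_zero] : ∀ j ∈ Finset.range (M+1), _)]
    exact Finset.sum_ite_eq' _ _ _
  rw [hRHS, hfilter]
  by_cases hk : k ≤ M
  · rw [if_pos (Finset.mem_range.mpr (by omega)), ← hw k hk]
    rw [Finset.sum_congr rfl fun v hv => by
      rw [hμ v, (Finset.mem_filter.mp hv).2], Finset.sum_const, nsmul_eq_mul]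
  · rw [if_neg (by simp; omega)]
    have : (Finset.univ.filter fun v : Fin M → Fin n => countTop n M v = k) = ∅ := by
      apply Finset.filter_false_of_mem
      intro v _
      have := countTop_le n M v
      omega
    simp [this]

lemma sum_ineq {Ω : Type*} [Fintype Ω] (d : Ω → ℝ) (s : Finset Ω)
    [DecidablePred (fun x => 0 < d x)] :
    ∑ x ∈ s, d x ≤ ∑ x ∈ Finset.univ.filter (fun x => 0 < d x), d x := by
  rw [← Finset.sum_filter_add_sum_filter_not s (fun x => 0 < d x)]
  have h1 : ∑ x ∈ s.filter (fun x => ¬ 0 < d x), d x ≤ 0 :=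
    Finset.sum_nonpos (fun x hx => le_of_not_gt (Finset.mem_filter.mp hx).2)
  have h2 : ∑ x ∈ s.filter (fun x => 0 < d x), d x
      ≤ ∑ x ∈ Finset.univ.filter (fun x => 0 < d x), d x :=
    Finset.sum_le_sum_of_subset_of_nonneg
      (Finset.filter_subset_filter _ (Finset.subset_univ s))
      (fun x hx _ => le_of_lt (Finset.mem_filter.mp hx).2)
  linarith

lemma abs_diff_le_bound {Ω : Type*} [MeasurableSpace Ω] (μ ν : Measure Ω)
    [IsFiniteMeasure μ] [IsFiniteMeasure ν] (A : Set Ω) :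
    |(μ A).toReal - (ν A).toReal| ≤ (μ Set.univ).toReal + (ν Set.univ).toReal := by
  have h1 : (μ A).toReal ≤ (μ Set.univ).toReal :=
    ENNReal.toReal_mono (measure_ne_top μ _) (measure_mono (Set.subset_univ _))
  have h2 : (ν A).toReal ≤ (ν Set.univ).toReal :=
    ENNReal.toReal_mono (measure_ne_top ν _) (measure_mono (Set.subset_univ _))
  have h3 : (0:ℝ) ≤ (μ A).toReal := ENNReal.toReal_nonneg
  have h4 : (0:ℝ) ≤ (ν A).toReal := ENNReal.toReal_nonneg
  rw [abs_sub_le_iff]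
  constructor <;> linarith

lemma tvDist_map_eq {Ω : Type*} [Fintype Ω] [MeasurableSpace Ω] [MeasurableSingletonClass Ω]
    (μ ν : Measure Ω) [IsFiniteMeasure μ] [IsFiniteMeasure ν] (T : Ω → ℕ) (f g : ℕ → ℝ)
    (hμ : ∀ v, (μ {v}).toReal = f (T v)) (hν : ∀ v, (ν {v}).toReal = g (T v)) :
    tvDist μ ν = tvDist (Measure.map T μ) (Measure.map T ν) := by
  classical
  have hT : Measurable T := measurable_of_finite' T
  have hmapμ : IsFiniteMeasure (Measure.map T μ) :=
    ⟨by rw [Measure.map_apply hT MeasurableSet.univ]; exact measure_lt_top μ _⟩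
  have hmapν : IsFiniteMeasure (Measure.map T ν) :=
    ⟨by rw [Measure.map_apply hT MeasurableSet.univ]; exact measure_lt_top ν _⟩
  have bdd1 : BddAbove (Set.range fun A : {A : Set Ω // MeasurableSet A} =>
      |(μ A.1).toReal - (ν A.1).toReal|) := by
    refine ⟨(μ Set.univ).toReal + (ν Set.univ).toReal, ?_⟩
    rintro _ ⟨A, rfl⟩
    exact abs_diff_le_bound μ ν A.1
  have bdd2 : BddAbove (Set.range fun B : {B : Set ℕ // MeasurableSet B} =>
      |(Measure.map T μ B.1).toReal - (Measure.map T ν B.1).toReal|) := by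
    refine ⟨(Measure.map T μ Set.univ).toReal + (Measure.map T ν Set.univ).toReal, ?_⟩
    rintro _ ⟨B, rfl⟩
    exact abs_diff_le_bound _ _ B.1
  have hdiff : ∀ A : Set Ω, (μ A).toReal - (ν A).toReal
      = ∑ x ∈ Finset.univ.filter (· ∈ A), (f (T x) - g (T x)) := by
    intro A
    rw [measure_toReal_eq_sum, measure_toReal_eq_sum, ← Finset.sum_sub_distrib]
    exact Finset.sum_congr rfl fun x _ => by rw [hμ, hν]
  have key : ∀ (A : Set Ω), (μ A).toReal - (ν A).toReal
      ≤ tvDist (Measure.map T μ) (Measure.map T ν) := by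
    intro A
    set B : Set ℕ := {k | 0 < f k - g k} with hB
    have hBm : MeasurableSet B := (Set.to_countable B).measurableSet
    have step1 : (μ A).toReal - (ν A).toReal
        ≤ (μ (T ⁻¹' B)).toReal - (ν (T ⁻¹' B)).toReal := by
      rw [hdiff A, hdiff (T ⁻¹' B)]
      have hfe : Finset.univ.filter (· ∈ T ⁻¹' B)
          = Finset.univ.filter (fun x => 0 < f (T x) - g (T x)) := by
        apply Finset.filter_congr; intro x _; simp [hB]
      rw [hfe]
      exact sum_ineq _ _
    have step2 : (μ (T ⁻¹' B)).toReal - (ν (T ⁻¹' B)).toReal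
        ≤ tvDist (Measure.map T μ) (Measure.map T ν) := by
      refine le_trans (le_abs_self _) ?_
      have : |(μ (T ⁻¹' B)).toReal - (ν (T ⁻¹' B)).toReal|
          = |(Measure.map T μ B).toReal - (Measure.map T ν B).toReal| := by
        rw [Measure.map_apply hT hBm, Measure.map_apply hT hBm]
      rw [this]
      exact le_ciSup bdd2 ⟨B, hBm⟩
    linarith
  have key' : ∀ (A : Set Ω), (ν A).toReal - (μ A).toReal
      ≤ tvDist (Measure.map T μ) (Measure.map T ν) := by
    intro A
    set B : Set ℕ := {k | 0 < g k - f k} with hB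
    have hBm : MeasurableSet B := (Set.to_countable B).measurableSet
    have hdiff' : ∀ A : Set Ω, (ν A).toReal - (μ A).toReal
        = ∑ x ∈ Finset.univ.filter (· ∈ A), (g (T x) - f (T x)) := by
      intro A
      rw [measure_toReal_eq_sum, measure_toReal_eq_sum, ← Finset.sum_sub_distrib]
      exact Finset.sum_congr rfl fun x _ => by rw [hμ, hν]
    have step1 : (ν A).toReal - (μ A).toReal
        ≤ (ν (T ⁻¹' B)).toReal - (μ (T ⁻¹' B)).toReal := by
      rw [hdiff' A, hdiff' (T ⁻¹' B)]
      have hfe : Finset.univ.filter (· ∈ T ⁻¹' B)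
          = Finset.univ.filter (fun x => 0 < g (T x) - f (T x)) := by
        apply Finset.filter_congr; intro x _; simp [hB]
      rw [hfe]
      exact sum_ineq _ _
    have step2 : (ν (T ⁻¹' B)).toReal - (μ (T ⁻¹' B)).toReal
        ≤ tvDist (Measure.map T μ) (Measure.map T ν) := by
      refine le_trans (le_abs_self _) ?_
      have : |(ν (T ⁻¹' B)).toReal - (μ (T ⁻¹' B)).toReal|
          = |(Measure.map T μ B).toReal - (Measure.map T ν B).toReal| := by
        rw [Measure.map_apply hT hBm, Measure.map_apply hT hBm, abs_sub_comm]
      rw [this]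
      exact le_ciSup bdd2 ⟨B, hBm⟩
    linarith
  apply le_antisymm
  · apply ciSup_le
    intro A
    exact abs_sub_le_iff.mpr ⟨key A.1, key' A.1⟩
  · apply ciSup_le
    intro B
    have : |(Measure.map T μ B.1).toReal - (Measure.map T ν B.1).toReal|
        = |(μ (T ⁻¹' B.1)).toReal - (ν (T ⁻¹' B.1)).toReal| := by
      rw [Measure.map_apply hT B.2, Measure.map_apply hT B.2]
    rw [this]
    exact le_ciSup bdd1 ⟨T ⁻¹' B.1, hT B.2⟩

lemma card_topHalf (n : ℕ) (hn : 1 ≤ n) : (topHalf n).card = n - (n + 1) / 2 + 1 := by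
  classical
  have ha : (n + 1) / 2 - 1 < n := by omega
  have : topHalf n = Finset.Ici (⟨(n + 1) / 2 - 1, ha⟩ : Fin n) := by
    ext i
    simp only [topHalf, Finset.mem_filter, Finset.mem_univ, true_and, Finset.mem_Ici,
      Fin.le_def]
    omega
  rw [this, Fin.card_Ici]
  simp only []
  omega

lemma enn_mu (n M k tc : ℕ) (hk : k ≤ M) (hn : 0 < n) (htc : tc ≤ n) :
    ((M.choose k * tc ^ k * (n - tc) ^ (M - k) : ℕ) : ENNReal) * ((n : ENNReal)⁻¹) ^ M
      = ENNReal.ofReal ((M.choose k : ℝ) * ((tc : ℝ) / n) ^ k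
          * (1 - (tc : ℝ) / n) ^ (M - k)) := by
  have hn' : (0:ℝ) < n := by exact_mod_cast hn
  have h1 : ((n : ENNReal))⁻¹ = ENNReal.ofReal ((n : ℝ)⁻¹) := by
    rw [ENNReal.ofReal_inv_of_pos hn', ENNReal.ofReal_natCast]
  rw [h1, ← ENNReal.ofReal_pow (by positivity), ← ENNReal.ofReal_natCast,
    ← ENNReal.ofReal_mul (by positivity)]
  congr 1
  have hpow : ((n:ℝ)⁻¹) ^ M = ((n:ℝ)⁻¹) ^ k * ((n:ℝ)⁻¹) ^ (M - k) := by
    rw [← pow_add, Nat.add_sub_cancel' hk]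
  have e2 : (1:ℝ) - (tc:ℝ) * (n:ℝ)⁻¹ = ((n:ℝ) - tc) * (n:ℝ)⁻¹ := by field_simp
  push_cast [htc]
  simp only [div_eq_mul_inv]
  rw [hpow, e2, mul_pow ((n:ℝ) - tc) ((n:ℝ)⁻¹) (M - k), mul_pow (tc:ℝ) ((n:ℝ)⁻¹) k]
  ring

lemma enn_nu (n M k tc : ℕ) (δ : ℝ) (hk : k ≤ M) (hδ0 : 0 < δ) (hδ1 : δ < 1)
    (htc0 : 0 < tc) (htcn : tc < n) :
    ((M.choose k * tc ^ k * (n - tc) ^ (M - k) : ℕ) : ENNReal)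
        * ((ENNReal.ofReal (1 - δ) * (n : ENNReal)⁻¹
            + ENNReal.ofReal δ * (tc : ENNReal)⁻¹) ^ k
          * (ENNReal.ofReal (1 - δ) * (n : ENNReal)⁻¹) ^ (M - k))
      = ENNReal.ofReal ((M.choose k : ℝ) * ((1 - δ) * ((tc : ℝ) / n) + δ) ^ k
          * (1 - ((1 - δ) * ((tc : ℝ) / n) + δ)) ^ (M - k)) := by
  have hn' : (0:ℝ) < n := by exact_mod_cast htc0.trans htcn
  have htc' : (0:ℝ) < tc := by exact_mod_cast htc0
  have hδ' : (0:ℝ) ≤ 1 - δ := by linarith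
  have hA : ENNReal.ofReal (1 - δ) * (n : ENNReal)⁻¹
      = ENNReal.ofReal ((1 - δ) * (n:ℝ)⁻¹) := by
    rw [ENNReal.ofReal_mul hδ', ENNReal.ofReal_inv_of_pos hn', ENNReal.ofReal_natCast]
  have hB : ENNReal.ofReal (1 - δ) * (n : ENNReal)⁻¹ + ENNReal.ofReal δ * (tc : ENNReal)⁻¹
      = ENNReal.ofReal ((1 - δ) * (n:ℝ)⁻¹ + δ * (tc:ℝ)⁻¹) := by
    rw [hA, ENNReal.ofReal_add (by positivity) (by positivity),
      ENNReal.ofReal_mul hδ0.le, ENNReal.ofReal_inv_of_pos htc', ENNReal.ofReal_natCast]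
  rw [hB, hA, ← ENNReal.ofReal_pow (by positivity), ← ENNReal.ofReal_pow (by positivity),
    ← ENNReal.ofReal_mul (by positivity), ← ENNReal.ofReal_natCast,
    ← ENNReal.ofReal_mul (by positivity)]
  congr 1
  have e1 : (1 - δ) * ((tc:ℝ) * (n:ℝ)⁻¹) + δ
      = (tc : ℝ) * ((1 - δ) * (n:ℝ)⁻¹ + δ * (tc:ℝ)⁻¹) := by
    field_simp
  have e2 : 1 - ((1 - δ) * ((tc:ℝ) * (n:ℝ)⁻¹) + δ)
      = ((n : ℝ) - tc) * ((1 - δ) * (n:ℝ)⁻¹) := by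
    field_simp
    ring
  push_cast [htcn.le]
  simp only [div_eq_mul_inv]
  rw [e2, e1, mul_pow ((n:ℝ) - tc) ((1 - δ) * (n:ℝ)⁻¹) (M - k),
    mul_pow (tc:ℝ) ((1 - δ) * (n:ℝ)⁻¹ + δ * (tc:ℝ)⁻¹) k]
  ring

instance muVec_fin (n M : ℕ) : IsFiniteMeasure (muVec n M) := by
  constructor
  rw [muVec, Measure.pi_univ]
  exact ENNReal.prod_lt_top fun i _ => measure_lt_top _ _

instance nuVec_fin (n M : ℕ) (δ : ℝ) : IsFiniteMeasure (nuVec n M δ) := by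
  constructor
  rw [nuVec, Measure.pi_univ]
  exact ENNReal.prod_lt_top fun i _ => measure_lt_top _ _

/-- **Reduction to binomials.**  For `n ≥ 3`, `M ≥ 1` and `0 < δ < 1`, with
`s = ⌈n/2⌉`, `q = (n − s + 1)/n` and `q' = (1 − δ) q + δ`, the total variation
distance between `μ_M` and `ν_{M,δ}` equals the total variation distance
between `Binomial(M, q)` and `Binomial(M, q')`; equivalently, it equals the
total variation distance between the laws of the number of coordinates that
are `≥ s` under the two vector distributions. -/
theorem tv_muVec_nuVec_eq_binomial (n M : ℕ) (hn : 3 ≤ n) (hM : 1 ≤ M)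
    (δ : ℝ) (hδ0 : 0 < δ) (hδ1 : δ < 1) :
    tvDist (muVec n M) (nuVec n M δ)
        = tvDist (binomMeasure M (((n - (n + 1) / 2 + 1 : ℕ) : ℝ) / n))
            (binomMeasure M ((1 - δ) * (((n - (n + 1) / 2 + 1 : ℕ) : ℝ) / n) + δ)) ∧
    tvDist (muVec n M) (nuVec n M δ)
        = tvDist (Measure.map (countTop n M) (muVec n M))
            (Measure.map (countTop n M) (nuVec n M δ)) := by
  classical
  set tc := (topHalf n).card with htc_def
  have htc : tc = n - (n + 1) / 2 + 1 := card_topHalf n (by omega)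
  have htc0 : 0 < tc := by omega
  have htcn : tc < n := by omega
  have hcast : ((n - (n + 1) / 2 + 1 : ℕ) : ℝ) = (tc : ℝ) := by rw [htc]
  -- point masses
  set f : ℕ → ℝ := fun _ => ((n:ℝ)⁻¹) ^ M with hf
  set g : ℕ → ℝ := fun k => ((1-δ) * (n:ℝ)⁻¹ + δ * (tc:ℝ)⁻¹) ^ k
      * ((1-δ) * (n:ℝ)⁻¹) ^ (M - k) with hg
  have hμpt : ∀ v, ((muVec n M) {v}).toReal = f (countTop n M v) := by
    intro v
    rw [muVec_singleton, hf]
    simp [ENNReal.toReal_pow, ENNReal.toReal_inv]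
  have hνpt : ∀ v, ((nuVec n M δ) {v}).toReal = g (countTop n M v) := by
    intro v
    rw [nuVec_singleton, hg]
    have hAne : ENNReal.ofReal (1-δ) * (n : ENNReal)⁻¹ ≠ ⊤ :=
      ENNReal.mul_ne_top ENNReal.ofReal_ne_top (ENNReal.inv_ne_top.mpr (by
        simp; omega))
    have hδtc : ENNReal.ofReal δ * (tc : ENNReal)⁻¹ ≠ ⊤ :=
      ENNReal.mul_ne_top ENNReal.ofReal_ne_top (ENNReal.inv_ne_top.mpr (by
        simp; omega))
    rw [ENNReal.toReal_mul, ENNReal.toReal_pow, ENNReal.toReal_pow,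
      ENNReal.toReal_add hAne hδtc, ENNReal.toReal_mul, ENNReal.toReal_mul,
      ENNReal.toReal_ofReal (by linarith), ENNReal.toReal_ofReal hδ0.le,
      ENNReal.toReal_inv, ENNReal.toReal_inv]
    simp
  have h2 : tvDist (muVec n M) (nuVec n M δ)
      = tvDist (Measure.map (countTop n M) (muVec n M))
          (Measure.map (countTop n M) (nuVec n M δ)) :=
    tvDist_map_eq _ _ _ f g hμpt hνpt
  have hcardk : ∀ k : ℕ,
      (Finset.univ.filter fun v : Fin M → Fin n => countTop n M v = k).card
        = M.choose k * tc ^ k * (n - tc) ^ (M - k) := by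
    intro k
    have : (Finset.univ.filter fun v : Fin M → Fin n => countTop n M v = k)
        = Finset.univ.filter fun v : Fin M → Fin n =>
            (Finset.univ.filter fun j => v j ∈ topHalf n).card = k := by
      apply Finset.filter_congr
      intro v _
      rw [countTop_eq]
    rw [this]
    exact counting n M (topHalf n) k
  have hmapμ : Measure.map (countTop n M) (muVec n M)
      = binomMeasure M (((n - (n + 1) / 2 + 1 : ℕ) : ℝ) / n) := by
    rw [binomMeasure]
    apply map_eq_weighted n M _ (fun _ => ((n : ENNReal)⁻¹) ^ M)
      (fun v => muVec_singleton n M v)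
    intro k hk
    rw [hcardk k, hcast]
    exact enn_mu n M k tc hk (by omega) (by omega)
  have hmapν : Measure.map (countTop n M) (nuVec n M δ)
      = binomMeasure M ((1 - δ) * (((n - (n + 1) / 2 + 1 : ℕ) : ℝ) / n) + δ) := by
    rw [binomMeasure]
    apply map_eq_weighted n M _
      (fun k => (ENNReal.ofReal (1-δ) * (n : ENNReal)⁻¹
          + ENNReal.ofReal δ * (tc : ENNReal)⁻¹) ^ k
        * (ENNReal.ofReal (1-δ) * (n : ENNReal)⁻¹) ^ (M - k))
      (fun v => nuVec_singleton n M δ v)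
    intro k hk
    rw [hcardk k, hcast]
    exact enn_nu n M k tc δ hk hδ0 hδ1 htc0 htcn
  exact ⟨by rw [h2, hmapμ, hmapν], h2⟩
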